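/- arXiv:2507.16464 — 3 statements merged into one kernel-verified Lean document; each statement's English description precedes it below -/
import Mathlib

section
/- For the FCC step cone K, if v ∈ K with 0 ≠ v ≤ e and u ∈ K satisfies supp(v) ⊆ supp(u), then the vector u - k v ∈ K, where k = min{u_i : i ∈ supp(u)}. -/
/-- Columns of the FCC step matrix: a1..a6 then d1..d12. -/
def fccCol : Fin 18 → Fin 3 → ℤ :=
  ![![2,0,0], ![0,2,0], ![0,0,2], ![-2,0,0], ![0,-2,0], ![0,0,-2],
    ![1,1,0], ![1,-1,0], ![-1,1,0], ![-1,-1,0],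
    ![1,0,1], ![1,0,-1], ![-1,0,1], ![-1,0,-1],
    ![0,1,1], ![0,1,-1], ![0,-1,1], ![0,-1,-1]]

theorem fcc_hilbert_key_step (v u : Fin 18 → ℤ) (k : ℤ)
    (hv0 : 0 ≤ v) (hvA : ∑ j : Fin 18, v j • fccCol j = 0)
    (hvle : ∀ i, v i ≤ 1) (hvne : v ≠ 0)
    (hu0 : 0 ≤ u) (huA : ∑ j : Fin 18, u j • fccCol j = 0)
    (hsupp : {i | 0 < v i} ⊆ {i | 0 < u i})
    (hk : IsLeast {t : ℤ | ∃ i, 0 < u i ∧ u i = t} k) :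
    0 ≤ u - k • v ∧ ∑ j : Fin 18, (u - k • v) j • fccCol j = 0 := by
  constructor
  · intro i
    have h0 : (0:ℤ) ≤ v i := hv0 i
    have hu : (0:ℤ) ≤ u i := hu0 i
    simp only [Pi.sub_apply, Pi.smul_apply, smul_eq_mul, Pi.zero_apply]
    rcases lt_or_eq_of_le h0 with h | h
    · have hv1 : v i = 1 := le_antisymm (hvle i) h
      have hui : 0 < u i := hsupp h
      have hku : k ≤ u i := hk.2 ⟨i, hui, rfl⟩
      rw [hv1]; omega
    · rw [← h]; simpa using hu
  · have key : ∑ j : Fin 18, (u - k • v) j • fccCol j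
        = ∑ j : Fin 18, u j • fccCol j - k • ∑ j : Fin 18, v j • fccCol j := by
      rw [Finset.smul_sum, ← Finset.sum_sub_distrib]
      refine Finset.sum_congr rfl fun j _ => ?_
      simp only [Pi.sub_apply, Pi.smul_apply, smul_eq_mul, sub_smul, mul_smul]
    rw [key, huA, hvA, smul_zero, sub_zero]
end

section
/- There are exactly 8 tuples consisting of an unordered triple of pairwise distinct, pairwise perpendicular unit cube vectors {a_i, a_j, a_k} and an unordered triple of distinct diagonal vectors {d_p, d_q, d_r} with a_i + a_j + a_k + d_p + d_q + d_r = 0 and no proper nonempty sub-multiset summing to zero (Type 9 elements, '3D identity of body diagonal'). -/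
set_option maxRecDepth 100000
set_option maxHeartbeats 10000000
set_option linter.unusedVariables false

/-- The six unit cube vectors a1..a6. -/
def aVec : Fin 6 → Fin 3 → ℤ :=
  ![![2,0,0], ![0,2,0], ![0,0,2], ![-2,0,0], ![0,-2,0], ![0,0,-2]]

/-- The twelve diagonal vectors d1..d12. -/
def dVec : Fin 12 → Fin 3 → ℤ :=
  ![![1,1,0], ![1,-1,0], ![-1,1,0], ![-1,-1,0],
    ![1,0,1], ![1,0,-1], ![-1,0,1], ![-1,0,-1],
    ![0,1,1], ![0,1,-1], ![0,-1,1], ![0,-1,-1]]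

/-- Split a subtype of a product into a sigma type, separating the part of the
predicate depending only on the first component. -/
def splitEquiv2 {α β : Type*} (Pa : α → Prop) (Q : α → β → Prop) :
    {p : α × β // Pa p.1 ∧ Q p.1 p.2} ≃ Σ a : {a // Pa a}, {b : β // Q a.1 b} where
  toFun x := ⟨⟨x.1.1, x.2.1⟩, x.1.2, x.2.2⟩
  invFun y := ⟨(y.1.1, y.2.1), y.1.2, y.2.2⟩
  left_inv x := rfl
  right_inv y := rfl

theorem fcc_type9_count :
    Nat.card {p : Finset (Fin 6) × Finset (Fin 12) //
      p.1.card = 3 ∧ p.2.card = 3 ∧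
      (∀ i ∈ p.1, ∀ j ∈ p.1, i ≠ j → ∑ t : Fin 3, aVec i t * aVec j t = 0) ∧
      (∑ i ∈ p.1, aVec i) + ∑ j ∈ p.2, dVec j = 0 ∧
      ∀ s : Multiset (Fin 3 → ℤ), s ≤ p.1.val.map aVec + p.2.val.map dVec →
        s ≠ 0 → s ≠ p.1.val.map aVec + p.2.val.map dVec → s.sum ≠ 0} = 8 := by
  rw [Nat.card_congr (Equiv.subtypeEquivRight (p := fun p : Finset (Fin 6) × Finset (Fin 12) =>
      p.1.card = 3 ∧ p.2.card = 3 ∧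
      (∀ i ∈ p.1, ∀ j ∈ p.1, i ≠ j → ∑ t : Fin 3, aVec i t * aVec j t = 0) ∧
      (∑ i ∈ p.1, aVec i) + ∑ j ∈ p.2, dVec j = 0 ∧
      ∀ s : Multiset (Fin 3 → ℤ), s ≤ p.1.val.map aVec + p.2.val.map dVec →
        s ≠ 0 → s ≠ p.1.val.map aVec + p.2.val.map dVec → s.sum ≠ 0)
      (q := fun p : Finset (Fin 6) × Finset (Fin 12) =>
      (p.1.card = 3 ∧ (∀ i ∈ p.1, ∀ j ∈ p.1, i ≠ j → ∑ t : Fin 3, aVec i t * aVec j t = 0)) ∧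
      (p.2.card = 3 ∧
      (∑ i ∈ p.1, aVec i) + ∑ j ∈ p.2, dVec j = 0 ∧
      ∀ s ∈ (p.1.val.map aVec + p.2.val.map dVec).powerset,
        s ≠ 0 → s ≠ p.1.val.map aVec + p.2.val.map dVec → s.sum ≠ 0))
      (fun p => by
        simp only [Multiset.mem_powerset]
        tauto)),
    Nat.card_congr (splitEquiv2
      (fun a : Finset (Fin 6) => a.card = 3 ∧
        (∀ i ∈ a, ∀ j ∈ a, i ≠ j → ∑ t : Fin 3, aVec i t * aVec j t = 0))
      (fun (a : Finset (Fin 6)) (b : Finset (Fin 12)) => b.card = 3 ∧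
        (∑ i ∈ a, aVec i) + ∑ j ∈ b, dVec j = 0 ∧
        ∀ s ∈ (a.val.map aVec + b.val.map dVec).powerset,
          s ≠ 0 → s ≠ a.val.map aVec + b.val.map dVec → s.sum ≠ 0)),
    Nat.card_eq_fintype_card, Fintype.card_sigma]
  decide
end

section
/- There are exactly 24 tuples consisting of one unit cube vector a_i, an unordered pair of distinct diagonal vectors {d_j, d_k}, and one further diagonal vector d_l, with a_i + d_j + d_k + 2 d_l = 0 and no proper nonempty sub-multiset of the multiset {a_i, d_j, d_k, d_l, d_l} summing to zero (Type 10 elements of the FCC Hilbert basis). -/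
set_option maxRecDepth 100000
set_option maxHeartbeats 4000000

/-- Ordered-pair version of the predicate, decidable and over a small space. -/
def Qpred (q : Fin 6 × Fin 12 × Fin 12 × Fin 12) : Prop :=
  q.2.1 < q.2.2.1 ∧
  aVec q.1 + (dVec q.2.1 + dVec q.2.2.1) + 2 • dVec q.2.2.2 = 0 ∧
  ∀ s ∈ (aVec q.1 ::ₘ dVec q.2.2.2 ::ₘ dVec q.2.2.2 ::ₘ dVec q.2.1 ::ₘ {dVec q.2.2.1}).powerset,
    s ≠ 0 → s ≠ aVec q.1 ::ₘ dVec q.2.2.2 ::ₘ dVec q.2.2.2 ::ₘ dVec q.2.1 ::ₘ {dVec q.2.2.1} →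
    s.sum ≠ 0

instance : DecidablePred Qpred := fun q => by unfold Qpred; infer_instance

lemma pair_val {j k : Fin 12} (h : j ≠ k) :
    ({j, k} : Finset (Fin 12)).val = j ::ₘ k ::ₘ 0 := by
  rw [show ({j, k} : Finset (Fin 12)) = insert j {k} from rfl,
    Finset.insert_val_of_notMem (by simpa using h), Finset.singleton_val]
  rfl

lemma pair_lt_inj {j k j' k' : Fin 12} (h : j < k) (h' : j' < k')
    (e : ({j, k} : Finset (Fin 12)) = {j', k'}) : j = j' ∧ k = k' := by
  have hj : j = j' ∨ j = k' := by
    have : j ∈ ({j', k'} : Finset (Fin 12)) := e ▸ (by simp)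
    simpa using this
  have hk : k = j' ∨ k = k' := by
    have : k ∈ ({j', k'} : Finset (Fin 12)) := e ▸ (by simp)
    simpa using this
  have hj' : j' = j ∨ j' = k := by
    have : j' ∈ ({j, k} : Finset (Fin 12)) := e ▸ (by simp)
    simpa using this
  rcases hj with rfl | rfl
  · refine ⟨rfl, ?_⟩
    rcases hk with rfl | rfl
    · exact absurd rfl h.ne
    · rfl
  · exfalso
    rcases hj' with rfl | rfl
    · exact absurd h' (lt_irrefl _)
    · exact absurd (h'.trans h) (lt_irrefl _)

def Ppred (p : Fin 6 × Finset (Fin 12) × Fin 12) : Prop :=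
  p.2.1.card = 2 ∧
  aVec p.1 + (∑ j ∈ p.2.1, dVec j) + 2 • dVec p.2.2 = 0 ∧
  ∀ s : Multiset (Fin 3 → ℤ),
    s ≤ aVec p.1 ::ₘ dVec p.2.2 ::ₘ dVec p.2.2 ::ₘ p.2.1.val.map dVec →
    s ≠ 0 → s ≠ aVec p.1 ::ₘ dVec p.2.2 ::ₘ dVec p.2.2 ::ₘ p.2.1.val.map dVec →
    s.sum ≠ 0

lemma compat {a : Fin 6} {j k l : Fin 12} (h : j < k) :
    Ppred (a, ({j, k} : Finset (Fin 12)), l) ↔ Qpred (a, j, k, l) := by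
  unfold Ppred Qpred
  simp only [Finset.sum_pair h.ne, pair_val h.ne, Finset.card_pair h.ne,
    Multiset.mem_powerset, Multiset.map_cons, Multiset.map_zero, h, true_and]
  rfl

theorem fcc_type10_count :
    Nat.card {p : Fin 6 × Finset (Fin 12) × Fin 12 //
      p.2.1.card = 2 ∧
      aVec p.1 + (∑ j ∈ p.2.1, dVec j) + 2 • dVec p.2.2 = 0 ∧
      ∀ s : Multiset (Fin 3 → ℤ),
        s ≤ aVec p.1 ::ₘ dVec p.2.2 ::ₘ dVec p.2.2 ::ₘ p.2.1.val.map dVec →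
        s ≠ 0 → s ≠ aVec p.1 ::ₘ dVec p.2.2 ::ₘ dVec p.2.2 ::ₘ p.2.1.val.map dVec →
        s.sum ≠ 0} = 24 := by
  show Nat.card {p : Fin 6 × Finset (Fin 12) × Fin 12 // Ppred p} = 24
  have hf : Function.Bijective (fun q : {q // Qpred q} =>
      (⟨(q.1.1, ({q.1.2.1, q.1.2.2.1} : Finset (Fin 12)), q.1.2.2.2),
        (compat q.2.1).mpr (by obtain ⟨⟨a,j,k,l⟩, hq⟩ := q; exact hq)⟩ :
        {p // Ppred p})) := by
    constructor
    · rintro ⟨⟨a,j,k,l⟩,hq⟩ ⟨⟨a',j',k',l'⟩,hq'⟩ hEq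
      simp only [Subtype.mk.injEq, Prod.mk.injEq] at hEq
      obtain ⟨ha, hs, hl⟩ := hEq
      obtain ⟨hj, hk⟩ := pair_lt_inj hq.1 hq'.1 hs
      simp_all
    · rintro ⟨⟨a,s,l⟩,hp⟩
      obtain ⟨x,y,hxy,rfl⟩ := Finset.card_eq_two.mp hp.1
      rcases hxy.lt_or_gt with h | h
      · exact ⟨⟨(a,x,y,l), (compat h).mp hp⟩, rfl⟩
      · refine ⟨⟨(a,y,x,l), (compat h).mp ?_⟩, ?_⟩
        · rwa [Finset.pair_comm y x]
        · apply Subtype.ext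
          simp [Finset.pair_comm x y]
  rw [Nat.card_congr (Equiv.ofBijective _ hf).symm, Nat.card_eq_fintype_card]
  decide
end
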